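/- Let T be a simplex with diameter h, Γ ∩ T a piecewise smooth hypersurface patch inside T admitting a Lipschitz graph parametrization over a plane (assumptions G1–G2). Then for any polynomial v of degree ≤ k on T, ‖v‖_{L^2(Γ∩T)} ≤ C h^{-1/2} ‖v‖_{L^2(T)} with C independent of the location of Γ within T. -/

import Mathlib

/-!
Two bounds are multiplied. First, an inverse estimate: on a cell `T` of diameter `h` containing a
ball of radius `ρ h`, a polynomial `v` of degree `≤ k` satisfies `|v x|² ≤ C h⁻ᵈ ‖v‖²_{L²(T)}` for
all `x ∈ T`. After the affine change of variables `x = z + h y`, which preserves the degree, this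
is the domination of the sup norm on the unit ball by the `L²` norm on the ball of radius `ρ`;
both are norms on the finite-dimensional space of polynomials of degree `≤ k`, hence equivalent.
Second, `Γ ∩ T` is an `L`-Lipschitz image of a hyperplane section of `T`, which is contained in
a `(d - 1)`-dimensional ball of radius `h`, so `μH[d - 1] (Γ ∩ T) ≤ C' hᵈ⁻¹`.
The product of the two bounds carries the factor `h⁻ᵈ hᵈ⁻¹ = h⁻¹`.
-/

open MeasureTheory Metric
open scoped RealInnerProductSpace NNReal ENNReal

theorem LinearMap.exists_norm_le_mul_norm_of_injective {𝕜 V E F : Type*}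
    [NontriviallyNormedField 𝕜] [CompleteSpace 𝕜] [AddCommGroup V] [Module 𝕜 V]
    [FiniteDimensional 𝕜 V] [NormedAddCommGroup E] [NormedSpace 𝕜 E]
    [NormedAddCommGroup F] [NormedSpace 𝕜 F]
    (A : V →ₗ[𝕜] E) (B : V →ₗ[𝕜] F) (hA : Function.Injective A) :
    ∃ C, ∀ v, ‖B v‖ ≤ C * ‖A v‖ := by
  let e := LinearEquiv.ofInjective A hA
  let T := (B ∘ₗ e.symm.toLinearMap).toContinuousLinearMap
  refine ⟨‖T‖, fun v => ?_⟩
  simpa [T, e] using T.le_opNorm (e v)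

theorem MeasureTheory.MemLp.norm_toLp_sq {α F : Type*} [MeasurableSpace α] {μ : Measure α}
    [NormedAddCommGroup F] {f : α → F} (hf : MemLp f 2 μ) :
    ‖hf.toLp f‖ ^ 2 = ∫ a, ‖f a‖ ^ 2 ∂μ := by
  rw [Lp.norm_toLp, hf.eLpNorm_eq_integral_rpow_norm two_ne_zero ENNReal.ofNat_ne_top,
    ENNReal.toReal_ofReal (by positivity)]
  simp only [ENNReal.toReal_ofNat, Real.rpow_two]
  rw [← Real.rpow_natCast, ← Real.rpow_mul (integral_nonneg fun _ => by positivity)]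
  norm_num

theorem Submodule.exists_sq_norm_le_mul_integral_sq_norm {X F : Type*} [TopologicalSpace X]
    [T2Space X] [MeasurableSpace X] [OpensMeasurableSpace X] [NormedAddCommGroup F]
    [NormedSpace ℝ F] [SecondCountableTopologyEither X F]
    (μ : Measure X) [IsFiniteMeasureOnCompacts μ]
    (V : Submodule ℝ (X → F)) [FiniteDimensional ℝ V] (hcont : ∀ f ∈ V, Continuous f)
    {K U : Set X} (hK : IsCompact K) (hU : IsCompact U)
    (hV : ∀ f ∈ V, f =ᵐ[μ.restrict U] 0 → f = 0) :
    ∃ C, 0 ≤ C ∧ ∀ f ∈ V, ∀ x ∈ K, ‖f x‖ ^ 2 ≤ C * ∫ y in U, ‖f y‖ ^ 2 ∂μ := by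
  have hL2 : ∀ f ∈ V, MemLp f 2 (μ.restrict U) := fun f hf =>
    (memLp_two_iff_integrable_sq_norm (hcont f hf).aestronglyMeasurable).2
      (ContinuousOn.integrableOn_compact hU ((hcont f hf).norm.pow 2).continuousOn)
  have : CompactSpace K := isCompact_iff_compactSpace.mp hK
  let toL2 : V →ₗ[ℝ] Lp F 2 (μ.restrict U) :=
    { toFun f := (hL2 f f.2).toLp f
      map_add' f g := MemLp.toLp_add _ _
      map_smul' c f := MemLp.toLp_const_smul c _ }
  let restrictK : V →ₗ[ℝ] C(K, F) :=
    { toFun f := ⟨fun x : K => (f : X → F) x, (hcont f f.2).comp continuous_subtype_val⟩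
      map_add' f g := rfl
      map_smul' c f := rfl }
  have hinj : Function.Injective toL2 := by
    refine (injective_iff_map_eq_zero toL2).2 fun f hf => Subtype.ext (hV f f.2 ?_)
    rw [← MemLp.toLp_eq_toLp_iff (hL2 f f.2) MemLp.zero]
    exact hf
  obtain ⟨C, hC⟩ := toL2.exists_norm_le_mul_norm_of_injective restrictK hinj
  refine ⟨C ^ 2, sq_nonneg C, fun f hf x hx => ?_⟩
  have hfx : ‖f x‖ ≤ C * ‖toL2 ⟨f, hf⟩‖ :=
    ((restrictK ⟨f, hf⟩).norm_coe_le_norm ⟨x, hx⟩).trans (hC ⟨f, hf⟩)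
  calc ‖f x‖ ^ 2 ≤ (C * ‖toL2 ⟨f, hf⟩‖) ^ 2 := pow_le_pow_left₀ (norm_nonneg _) hfx 2
    _ = C ^ 2 * ∫ y in U, ‖f y‖ ^ 2 ∂μ := by rw [mul_pow, ← (hL2 f hf).norm_toLp_sq]; rfl

theorem MvPolynomial.totalDegree_bind₁_le {σ τ R : Type*} [CommSemiring R]
    {g : σ → MvPolynomial τ R} {n : ℕ} (hg : ∀ i, (g i).totalDegree ≤ n) (p : MvPolynomial σ R) :
    (bind₁ g p).totalDegree ≤ n * p.totalDegree := by
  conv_lhs => rw [p.as_sum, map_sum]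
  refine (totalDegree_finsetSum _ _).trans <| Finset.sup_le fun m hm => ?_
  rw [bind₁_monomial]
  refine (totalDegree_mul _ _).trans ?_
  rw [totalDegree_C, zero_add]
  refine (totalDegree_finsetProd _ _).trans ?_
  calc ∑ i ∈ m.support, ((g i) ^ m i).totalDegree
      ≤ ∑ i ∈ m.support, n * m i := Finset.sum_le_sum fun i _ =>
        (totalDegree_pow _ _).trans (by rw [mul_comm]; exact Nat.mul_le_mul_right _ (hg i))
    _ = n * m.degree := by rw [← Finset.mul_sum, Finsupp.degree_apply]
    _ ≤ n * p.totalDegree := Nat.mul_le_mul_left _ (le_totalDegree hm)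

theorem MeasureTheory.Measure.setIntegral_closedBall_comp_add_smul {E F : Type*}
    [NormedAddCommGroup E] [NormedSpace ℝ E] [FiniteDimensional ℝ E] [MeasurableSpace E]
    [BorelSpace E] (μ : Measure E) [μ.IsAddHaarMeasure] [NormedAddCommGroup F] [NormedSpace ℝ F]
    (f : E → F) (z : E) {h r : ℝ} (hh : 0 < h) (hr : 0 ≤ r) :
    ∫ y in closedBall 0 r, f (z + h • y) ∂μ =
      (h ^ Module.finrank ℝ E)⁻¹ • ∫ x in closedBall z (h * r), f x ∂μ := by
  have hball : (z + ·) ⁻¹' closedBall z (h * r) = closedBall 0 (h * r) := by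
    simp [preimage_add_closedBall]
  rw [μ.setIntegral_comp_smul_of_pos (fun w => f (z + w)) _ hh, smul_closedBall _ _ hr, smul_zero,
    Real.norm_eq_abs, abs_of_pos hh, ← hball,
    (measurePreserving_add_left μ z).setIntegral_preimage_emb (measurableEmbedding_addLeft z)]

noncomputable def polynomialFunctionsTotalDegreeLE (d k : ℕ) :
    Submodule ℝ (EuclideanSpace ℝ (Fin d) → ℝ) :=
  (MvPolynomial.restrictTotalDegree (Fin d) ℝ k).map
    (LinearMap.pi fun x : EuclideanSpace ℝ (Fin d) =>
      (MvPolynomial.aeval fun i => x i).toLinearMap)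

namespace polynomialFunctionsTotalDegreeLE

variable {d k : ℕ}

theorem mem_iff {f : EuclideanSpace ℝ (Fin d) → ℝ} :
    f ∈ polynomialFunctionsTotalDegreeLE d k ↔
      ∃ p : MvPolynomial (Fin d) ℝ, p.totalDegree ≤ k ∧
        ∀ x, f x = MvPolynomial.eval (fun i => x i) p := by
  simp [polynomialFunctionsTotalDegreeLE, MvPolynomial.mem_restrictTotalDegree, funext_iff, eq_comm]

instance : FiniteDimensional ℝ (polynomialFunctionsTotalDegreeLE d k) := by
  unfold polynomialFunctionsTotalDegreeLE; infer_instance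

theorem analyticOnNhd {f : EuclideanSpace ℝ (Fin d) → ℝ}
    (hf : f ∈ polynomialFunctionsTotalDegreeLE d k) : AnalyticOnNhd ℝ f Set.univ := by
  obtain ⟨p, -, hfp⟩ := mem_iff.1 hf
  rw [funext hfp]
  exact AnalyticOnNhd.eval_continuousLinearMap
    (PiLp.continuousLinearEquiv 2 ℝ (fun _ : Fin d => ℝ)).toContinuousLinearMap p

theorem continuous {f : EuclideanSpace ℝ (Fin d) → ℝ}
    (hf : f ∈ polynomialFunctionsTotalDegreeLE d k) : Continuous f :=
  continuousOn_univ.mp (analyticOnNhd hf).continuousOn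

theorem eq_zero_of_ae_eq_zero {f : EuclideanSpace ℝ (Fin d) → ℝ}
    (hf : f ∈ polynomialFunctionsTotalDegreeLE d k) {U : Set (EuclideanSpace ℝ (Fin d))}
    (hU : (interior U).Nonempty) (hf0 : f =ᵐ[volume.restrict U] 0) : f = 0 := by
  obtain ⟨x₀, hx₀⟩ := hU
  have hzero : Set.EqOn f 0 (interior U) :=
    Measure.eqOn_open_of_ae_eq (ae_restrict_of_ae_restrict_of_subset interior_subset hf0)
      isOpen_interior (continuous hf).continuousOn continuousOn_const
  funext x
  exact (analyticOnNhd hf).eqOn_zero_of_preconnected_of_eventuallyEq_zero isPreconnected_univ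
    (Set.mem_univ x₀) (Filter.eventuallyEq_of_mem (isOpen_interior.mem_nhds hx₀) hzero)
    (Set.mem_univ x)

theorem comp_add_smul {f : EuclideanSpace ℝ (Fin d) → ℝ}
    (hf : f ∈ polynomialFunctionsTotalDegreeLE d k) (z : EuclideanSpace ℝ (Fin d)) (h : ℝ) :
    (fun y => f (z + h • y)) ∈ polynomialFunctionsTotalDegreeLE d k := by
  obtain ⟨p, hpk, hfp⟩ := mem_iff.1 hf
  refine mem_iff.2 ⟨MvPolynomial.bind₁ (fun i => .C (z i) + .C h * .X i) p, ?_, fun y => ?_⟩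
  · refine (MvPolynomial.totalDegree_bind₁_le (n := 1) (fun i => ?_) p).trans (by omega)
    refine (MvPolynomial.totalDegree_add _ _).trans (max_le (by simp) ?_)
    exact (MvPolynomial.totalDegree_mul _ _).trans (by simp)
  · rw [hfp]
    simp only [MvPolynomial.eval, MvPolynomial.eval₂Hom_bind₁]
    simp

theorem exists_sq_norm_le_mul_integral (d k : ℕ) {ρ : ℝ} (hρ : 0 < ρ) :
    ∃ C, 0 ≤ C ∧ ∀ f ∈ polynomialFunctionsTotalDegreeLE d k,
      ∀ (T : Set (EuclideanSpace ℝ (Fin d))) (z : EuclideanSpace ℝ (Fin d)) (h : ℝ), 0 < h →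
        closedBall z (ρ * h) ⊆ T → T ⊆ closedBall z h →
          ∀ x ∈ T, ‖f x‖ ^ 2 ≤ C * (h ^ d)⁻¹ * ∫ y in T, ‖f y‖ ^ 2 := by
  obtain ⟨C, hC0, hC⟩ := Submodule.exists_sq_norm_le_mul_integral_sq_norm volume
    (polynomialFunctionsTotalDegreeLE d k) (fun f hf => continuous hf)
    (isCompact_closedBall 0 1) (isCompact_closedBall 0 ρ) fun f hf =>
      eq_zero_of_ae_eq_zero hf ⟨0, by simpa [interior_closedBall _ hρ.ne'] using hρ⟩
  refine ⟨C, hC0, fun f hf T z h hh hball hT x hx => ?_⟩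
  have hy : h⁻¹ • (x - z) ∈ closedBall (0 : EuclideanSpace ℝ (Fin d)) 1 := by
    rw [mem_closedBall_zero_iff, norm_smul, Real.norm_eq_abs, abs_of_pos (inv_pos.2 hh),
      inv_mul_le_one₀ hh, ← dist_eq_norm]
    exact hT hx
  have hxy : z + h • h⁻¹ • (x - z) = x := by
    rw [smul_inv_smul₀ hh.ne', add_sub_cancel]
  have hfT : IntegrableOn (fun y => ‖f y‖ ^ 2) T :=
    (ContinuousOn.integrableOn_compact (isCompact_closedBall z h)
      ((continuous hf).norm.pow 2).continuousOn).mono_set hT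
  have hball_le : ∫ y in closedBall z (h * ρ), ‖f y‖ ^ 2 ≤ ∫ y in T, ‖f y‖ ^ 2 :=
    setIntegral_mono_set hfT (Filter.Eventually.of_forall fun _ => by positivity)
      (by rw [mul_comm]; exact hball.eventuallyLE)
  have hscaled := hC _ (comp_add_smul hf z h) _ hy
  rw [volume.setIntegral_closedBall_comp_add_smul (fun y => ‖f y‖ ^ 2) z hh hρ.le,
    finrank_euclideanSpace_fin, hxy, smul_eq_mul] at hscaled
  calc ‖f x‖ ^ 2 ≤ C * ((h ^ d)⁻¹ * ∫ y in closedBall z (h * ρ), ‖f y‖ ^ 2) := hscaled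
    _ ≤ C * ((h ^ d)⁻¹ * ∫ y in T, ‖f y‖ ^ 2) := by gcongr
    _ = C * (h ^ d)⁻¹ * ∫ y in T, ‖f y‖ ^ 2 := by ring

end polynomialFunctionsTotalDegreeLE

theorem exists_isometry_range_eq_hyperplane {E : Type*} [NormedAddCommGroup E]
    [InnerProductSpace ℝ E] [FiniteDimensional ℝ E] {m : ℕ} (hE : Module.finrank ℝ E = m + 1)
    {e : E} (he : e ≠ 0) {z₀ w : E} (hw : ⟪w - z₀, e⟫ = 0) :
    ∃ ψ : EuclideanSpace ℝ (Fin m) → E, Isometry ψ ∧ ψ 0 = w ∧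
      Set.range ψ = {y | ⟪y - z₀, e⟫ = 0} := by
  have hW : Module.finrank ℝ (ℝ ∙ e)ᗮ = m := by
    have := Submodule.finrank_add_finrank_orthogonal (ℝ ∙ e)
    rw [finrank_span_singleton he, hE] at this
    omega
  let B := (stdOrthonormalBasis ℝ (ℝ ∙ e)ᗮ).reindex (finCongr hW)
  refine ⟨fun u => w + (B.repr.symm u : E), ?_, by simp, ?_⟩
  · refine Isometry.of_dist_eq fun u u' => ?_
    rw [dist_add_left, ← Subtype.dist_eq, B.repr.symm.dist_map]
  · ext y
    have hsplit : ⟪y - z₀, e⟫ = ⟪e, y - w⟫ := by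
      rw [← sub_add_sub_cancel y w z₀, inner_add_left, hw, add_zero, real_inner_comm]
    rw [Set.mem_ofPred_eq, hsplit, ← Submodule.mem_orthogonal_singleton_iff_inner_right]
    constructor
    · rintro ⟨u, rfl⟩
      simp
    · intro hy
      exact ⟨B.repr ⟨y - w, hy⟩, by simp⟩

theorem hausdorffMeasure_image_hyperplane_inter_le {E E' : Type*} [NormedAddCommGroup E]
    [InnerProductSpace ℝ E] [FiniteDimensional ℝ E] [EMetricSpace E'] [MeasurableSpace E']
    [BorelSpace E'] {m : ℕ} (hE : Module.finrank ℝ E = m + 1) {e : E} (he : e ≠ 0) (z₀ : E)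
    {T : Set E} (hT : Bornology.IsBounded T) {f : E → E'} {L : ℝ≥0} (hf : LipschitzWith L f) :
    μH[m] (f '' ({y | ⟪y - z₀, e⟫ = 0} ∩ T)) ≤
      ENNReal.ofReal (diam T ^ m) *
        ((L : ℝ≥0∞) ^ m * μH[m] (closedBall (0 : EuclideanSpace ℝ (Fin m)) 1)) := by
  rcases ({y | ⟪y - z₀, e⟫ = 0} ∩ T).eq_empty_or_nonempty with hempty | ⟨w, hwS, hwT⟩
  · simp [hempty]
  obtain ⟨ψ, hψ, hψ0, hψS⟩ := exists_isometry_range_eq_hyperplane hE he hwS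
  have hsub : {y | ⟪y - z₀, e⟫ = 0} ∩ T ⊆ ψ '' closedBall 0 (diam T) := by
    rintro y ⟨hyS, hyT⟩
    obtain ⟨u, rfl⟩ := hψS.symm ▸ hyS
    refine ⟨u, ?_, rfl⟩
    rw [mem_closedBall, ← hψ.dist_eq, hψ0]
    exact dist_le_diam_of_mem hT hyT hwT
  calc μH[m] (f '' ({y | ⟪y - z₀, e⟫ = 0} ∩ T))
      ≤ μH[m] ((f ∘ ψ) '' closedBall 0 (diam T)) := by
        rw [Set.image_comp]; exact measure_mono (Set.image_mono hsub)
    _ ≤ (L : ℝ≥0∞) ^ (m : ℝ) * μH[m] (closedBall (0 : EuclideanSpace ℝ (Fin m)) (diam T)) := by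
        simpa using (hf.comp hψ.lipschitz).hausdorffMeasure_image_le (Nat.cast_nonneg m) _
    _ = _ := by
        rw [Measure.addHaar_closedBall' _ _ diam_nonneg, finrank_euclideanSpace_fin,
          ENNReal.rpow_natCast]
        ring

theorem MeasureTheory.setIntegral_le_mul_of_norm_le_of_measure_le {α : Type*}
    [MeasurableSpace α] {μ : Measure α} {s : Set α} {g : α → ℝ} {M a : ℝ} (hM : 0 ≤ M)
    (ha : 0 ≤ a) (hg : ∀ x ∈ s, ‖g x‖ ≤ M) (hs : μ s ≤ ENNReal.ofReal a) :
    ∫ x in s, g x ∂μ ≤ M * a :=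
  calc ∫ x in s, g x ∂μ ≤ ‖∫ x in s, g x ∂μ‖ := Real.le_norm_self _
    _ ≤ M * μ.real s := norm_setIntegral_le_of_norm_le_const (hs.trans_lt ENNReal.ofReal_lt_top) hg
    _ ≤ M * a := mul_le_mul_of_nonneg_left (ENNReal.toReal_le_of_le_ofReal ha hs) hM

/-- Cut-element inverse trace inequality: for every dimension `d`,
polynomial degree `k`, shape-regularity constant `ρ > 0` and Lipschitz parametrization
bound `L`, there is `C > 0` such that for every convex cell `T` of diameter `h`
containing a ball of radius `ρ h`, and every hypersurface `Γ` such that `Γ ∩ T` is the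
image of a plane section `S ∩ T` under an `L`-Lipschitz parametrization
(assumptions G1–G2), every polynomial `v` of total degree at most `k` satisfies
`‖v‖²_{L²(Γ∩T)} ≤ C h⁻¹ ‖v‖²_{L²(T)}`, with `C` independent of how `Γ` cuts `T`
(`Γ ∩ T` carries the `(d−1)`-dimensional Hausdorff measure). -/
theorem cut_trace_inequality_polynomials
    (d k : ℕ) (ρ : ℝ) (hρ : 0 < ρ) (L : ℝ≥0) :
    ∃ C > 0, ∀ (T Γ : Set (EuclideanSpace ℝ (Fin d))) (h : ℝ), 0 < h →
      Convex ℝ T → Metric.diam T = h →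
      (∃ z, Metric.closedBall z (ρ * h) ⊆ T) →
      (∃ (e z₀ : EuclideanSpace ℝ (Fin d)) (f : EuclideanSpace ℝ (Fin d) → EuclideanSpace ℝ (Fin d)),
        ‖e‖ = 1 ∧ LipschitzWith L f ∧
        Γ ∩ T = f '' ({y | ⟪y - z₀, e⟫ = 0} ∩ T)) →
      ∀ v : EuclideanSpace ℝ (Fin d) → ℝ,
        (∃ p : MvPolynomial (Fin d) ℝ, p.totalDegree ≤ k ∧
          ∀ x, v x = MvPolynomial.eval (fun i => x i) p) →
        (∫ x in Γ ∩ T, ‖v x‖ ^ 2 ∂(MeasureTheory.Measure.hausdorffMeasure ((d : ℝ) - 1)))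
          ≤ C * h⁻¹ * ∫ x in T, ‖v x‖ ^ 2 := by
  rcases d with _ | m
  · refine ⟨1, one_pos, ?_⟩
    rintro T Γ h - - - - ⟨e, -, -, he, -⟩
    simp [Subsingleton.elim e 0] at he
  obtain ⟨C₁, hC₁, hinv⟩ :=
    polynomialFunctionsTotalDegreeLE.exists_sq_norm_le_mul_integral (m + 1) k hρ
  set B := (L : ℝ≥0∞) ^ m * μH[m] (closedBall (0 : EuclideanSpace ℝ (Fin m)) 1)
  have hB : B ≠ ⊤ := ENNReal.mul_ne_top (by simp) (isCompact_closedBall _ _).measure_lt_top.ne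
  refine ⟨C₁ * B.toReal + 1, by positivity, ?_⟩
  rintro T Γ h hh - hdiam ⟨z, hz⟩ ⟨e, z₀, f, he, hf, hΓ⟩ v hv
  have hvV := polynomialFunctionsTotalDegreeLE.mem_iff.2 hv
  have hT : Bornology.IsBounded T := by
    by_contra hT; exact hh.ne' (hdiam ▸ diam_eq_zero_of_unbounded hT)
  have hTz : T ⊆ closedBall z h := fun x hx =>
    (dist_le_diam_of_mem hT hx (hz (mem_closedBall_self (by positivity)))).trans_eq hdiam
  have hΓT : μH[((m + 1 : ℕ) : ℝ) - 1] (Γ ∩ T) ≤ ENNReal.ofReal (h ^ m * B.toReal) := by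
    rw [Nat.cast_succ, add_sub_cancel_right, hΓ, ENNReal.ofReal_mul (by positivity),
      ENNReal.ofReal_toReal hB, ← hdiam]
    exact hausdorffMeasure_image_hyperplane_inter_le finrank_euclideanSpace_fin
      (by rintro rfl; simp at he) z₀ hT hf
  calc ∫ x in Γ ∩ T, ‖v x‖ ^ 2 ∂μH[((m + 1 : ℕ) : ℝ) - 1]
      ≤ (C₁ * (h ^ (m + 1))⁻¹ * ∫ x in T, ‖v x‖ ^ 2) * (h ^ m * B.toReal) :=
        setIntegral_le_mul_of_norm_le_of_measure_le (by positivity) (by positivity)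
          (fun x hx => by simpa using hinv v hvV T z h hh hz hTz x hx.2) hΓT
    _ = C₁ * B.toReal * h⁻¹ * ∫ x in T, ‖v x‖ ^ 2 := by field_simp; ring
    _ ≤ (C₁ * B.toReal + 1) * h⁻¹ * ∫ x in T, ‖v x‖ ^ 2 := by
        gcongr
        linarith
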